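/- arXiv:0907.1696 — 3 statements merged into one kernel-verified Lean document; each statement's English description precedes it below -/
import Mathlib

section
/- Let λ₁, λ₂, λ₃, λ₄ be real numbers with λ₁ > 0, λ₂ > 0, 4λ₁λ₂ > λ₃², and 4λ₁λ₂ > (λ₃ + λ₄)². Then for all complex vectors φ₁, φ₂ ∈ ℂ³ not both zero, the quartic form V₄ = λ₁(φ₁†φ₁)² + λ₂(φ₂†φ₂)² + λ₃(φ₁†φ₁)(φ₂†φ₂) + λ₄|φ₁†φ₂|² is strictly positive. -/
open scoped InnerProductSpace

/-! With `a = ‖φ₁‖²`, `b = ‖φ₂‖²` and `c = |⟪φ₁, φ₂⟫|²`, the form is affine in `c`, and Cauchy–Schwarz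
confines `c` to `[0, a b]`. So it suffices to check the two endpoints, where the form becomes the
binary quadratic `λ₁ a² + λ₂ b² + m a b` with `m = λ₃` resp. `m = λ₃ + λ₄`; each is positive
definite because its discriminant condition `4 λ₁ λ₂ > m²` holds. -/

theorem binary_quadratic_pos {l1 l2 m a b : ℝ} (h1 : 0 < l1) (hm : m ^ 2 < 4 * l1 * l2)
    (hab : a ≠ 0 ∨ b ≠ 0) : 0 < l1 * a ^ 2 + l2 * b ^ 2 + m * (a * b) := by
  have hsq : 4 * l1 * (l1 * a ^ 2 + l2 * b ^ 2 + m * (a * b))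
      = (2 * l1 * a + m * b) ^ 2 + (4 * l1 * l2 - m ^ 2) * b ^ 2 := by ring
  suffices 0 < 4 * l1 * (l1 * a ^ 2 + l2 * b ^ 2 + m * (a * b)) from
    pos_of_mul_pos_right this (by positivity)
  rw [hsq]
  by_cases hb : b = 0
  · subst hb
    have ha : a ≠ 0 := by simpa using hab
    simp only [mul_zero, add_zero, zero_pow two_ne_zero]
    positivity
  · have : 0 < (4 * l1 * l2 - m ^ 2) * b ^ 2 := mul_pos (by linarith) (by positivity)
    positivity

theorem add_mul_pos_of_mem_Icc {A k c p : ℝ} (hc : c ∈ Set.Icc 0 p) (h0 : 0 < A)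
    (hp : 0 < A + k * p) : 0 < A + k * c := by
  obtain ⟨hc0, hcp⟩ := hc
  rcases le_total 0 k with hk | hk
  · nlinarith
  · nlinarith

theorem stmt_3_general (l1 l2 l3 l4 : ℝ) (h1 : 0 < l1)
    (h3 : 4 * l1 * l2 > l3 ^ 2) (h4 : 4 * l1 * l2 > (l3 + l4) ^ 2)
    (φ1 φ2 : EuclideanSpace ℂ (Fin 3)) (hne : ¬(φ1 = 0 ∧ φ2 = 0)) :
    0 < l1 * ‖φ1‖ ^ 4 + l2 * ‖φ2‖ ^ 4 + l3 * (‖φ1‖ ^ 2 * ‖φ2‖ ^ 2)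
      + l4 * ‖(⟪φ1, φ2⟫_ℂ : ℂ)‖ ^ 2 := by
  have hab : ‖φ1‖ ^ 2 ≠ 0 ∨ ‖φ2‖ ^ 2 ≠ 0 := by
    simpa only [ne_eq, pow_eq_zero_iff two_ne_zero, norm_eq_zero, not_and_or] using hne
  have hcs : ‖(⟪φ1, φ2⟫_ℂ : ℂ)‖ ^ 2 ∈ Set.Icc 0 (‖φ1‖ ^ 2 * ‖φ2‖ ^ 2) :=
    ⟨by positivity, by rw [← mul_pow]; gcongr; exact norm_inner_le_norm φ1 φ2⟩
  have hend : 0 < l1 * (‖φ1‖ ^ 2) ^ 2 + l2 * (‖φ2‖ ^ 2) ^ 2 + l3 * (‖φ1‖ ^ 2 * ‖φ2‖ ^ 2)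
      + l4 * (‖φ1‖ ^ 2 * ‖φ2‖ ^ 2) := by
    have := binary_quadratic_pos h1 h4 hab
    linarith
  have := add_mul_pos_of_mem_Icc hcs (binary_quadratic_pos h1 h3 hab) hend
  convert this using 3
  ring

/-- Strong stability: under λ₁>0, λ₂>0, 4λ₁λ₂>λ₃², 4λ₁λ₂>(λ₃+λ₄)², the quartic
part of the economical 3-3-1 potential is strictly positive for (φ₁,φ₂) ≠ (0,0). -/
theorem stmt_3 (l1 l2 l3 l4 : ℝ) (h1 : 0 < l1) (h2 : 0 < l2)
    (h3 : 4 * l1 * l2 > l3 ^ 2) (h4 : 4 * l1 * l2 > (l3 + l4) ^ 2)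
    (φ1 φ2 : EuclideanSpace ℂ (Fin 3)) (hne : ¬(φ1 = 0 ∧ φ2 = 0)) :
    0 < l1 * ‖φ1‖ ^ 4 + l2 * ‖φ2‖ ^ 4 + l3 * (‖φ1‖ ^ 2 * ‖φ2‖ ^ 2)
      + l4 * ‖(⟪φ1, φ2⟫_ℂ : ℂ)‖ ^ 2 :=
  stmt_3_general l1 l2 l3 l4 h1 h3 h4 φ1 φ2 hne
end

section
/- Let λ₁, λ₂, λ₃ ∈ ℝ with λ₁ > 0, λ₂ > 0, 4λ₁λ₂ > λ₃², and let v₁, V₁, v₂ ∈ ℝ not all zero with v₂ ≠ 0 and v₁² + V₁² ≠ 0. Then the symmetric 3×3 matrix M² = [[2λ₁V₁², λ₃v₂V₁, 2λ₁v₁V₁],[λ₃v₂V₁, 2λ₂v₂², λ₃v₁v₂],[2λ₁v₁V₁, λ₃v₁v₂, 2λ₁v₁²]] is positive semidefinite, has rank 2, and its two nonzero eigenvalues are M²± = (v₁²+V₁²)λ₁ + v₂²λ₂ ± √{[(v₁²+V₁²)λ₁ + v₂²λ₂]² + v₂²(v₁²+V₁²)(λ₃² - 4λ₁λ₂)}, both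 of which are strictly positive. -/
/-!
Writing `a = (V₁, 0, v₁)` and `b = (0, v₂, 0)`, the mass matrix is `A Λ Aᵀ` with `A = [a b]` and
`Λ = [[2λ₁, λ₃], [λ₃, 2λ₂]]`. Since `Λ` is positive definite and `a, b` are linearly independent,
`M²` is positive semidefinite with kernel `{a, b}ᗮ`, hence of rank 2. Because `a ⟂ b`, the
characteristic polynomial factors as `μ (μ² - 2Pμ + Q)` with `P = (v₁² + V₁²)λ₁ + v₂²λ₂` and
`Q = (v₁² + V₁²) v₂² (4λ₁λ₂ - λ₃²) > 0`, so both roots `P ± √(P² - Q)` are eigenvalues, and they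
are positive since `0 < Q ≤ P²`.
-/

open Matrix

section PullbackBinaryForm

variable {n : Type*} (l1 l2 l3 : ℝ) (a b : n → ℝ)

def pullbackBinaryForm : Matrix n n ℝ :=
  (2 * l1) • vecMulVec a a + l3 • (vecMulVec a b + vecMulVec b a) + (2 * l2) • vecMulVec b b

theorem pullbackBinaryForm_isHermitian : (pullbackBinaryForm l1 l2 l3 a b).IsHermitian := by
  simp only [IsHermitian, conjTranspose_eq_transpose_of_trivial, pullbackBinaryForm,
    transpose_add, transpose_smul, transpose_vecMulVec]
  abel_nf

variable [Fintype n]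

theorem pullbackBinaryForm_mulVec (x : n → ℝ) :
    pullbackBinaryForm l1 l2 l3 a b *ᵥ x =
      (2 * l1 * (a ⬝ᵥ x) + l3 * (b ⬝ᵥ x)) • a + (l3 * (a ⬝ᵥ x) + 2 * l2 * (b ⬝ᵥ x)) • b := by
  simp only [pullbackBinaryForm, add_mulVec, smul_mulVec, vecMulVec_mulVec, op_smul_eq_smul]
  module

theorem dotProduct_pullbackBinaryForm_mulVec (x : n → ℝ) :
    x ⬝ᵥ (pullbackBinaryForm l1 l2 l3 a b *ᵥ x) =
      2 * l1 * (a ⬝ᵥ x) ^ 2 + 2 * l3 * (a ⬝ᵥ x) * (b ⬝ᵥ x) + 2 * l2 * (b ⬝ᵥ x) ^ 2 := by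
  rw [pullbackBinaryForm_mulVec, dotProduct_add, dotProduct_smul, dotProduct_smul,
    dotProduct_comm x a, dotProduct_comm x b, smul_eq_mul, smul_eq_mul]
  ring

theorem binaryForm_nonneg {l1 l2 l3 : ℝ} (hl2 : 0 < l2) (hdisc : l3 ^ 2 ≤ 4 * l1 * l2) (s t : ℝ) :
    0 ≤ 2 * l1 * s ^ 2 + 2 * l3 * s * t + 2 * l2 * t ^ 2 := by
  have hsq : 2 * l2 * (2 * l1 * s ^ 2 + 2 * l3 * s * t + 2 * l2 * t ^ 2) =
      (2 * l2 * t + l3 * s) ^ 2 + (4 * l1 * l2 - l3 ^ 2) * s ^ 2 := by ring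
  have : 0 ≤ 2 * l2 * (2 * l1 * s ^ 2 + 2 * l3 * s * t + 2 * l2 * t ^ 2) := by
    rw [hsq]; have := sub_nonneg.2 hdisc; positivity
  exact nonneg_of_mul_nonneg_right this (by positivity)

theorem pullbackBinaryForm_posSemidef {l1 l2 l3 : ℝ} (hl2 : 0 < l2) (hdisc : l3 ^ 2 ≤ 4 * l1 * l2) :
    (pullbackBinaryForm l1 l2 l3 a b).PosSemidef := by
  refine posSemidef_iff_dotProduct_mulVec.2 ⟨pullbackBinaryForm_isHermitian .., fun x => ?_⟩
  rw [star_trivial, dotProduct_pullbackBinaryForm_mulVec]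
  exact binaryForm_nonneg hl2 hdisc _ _

theorem pullbackBinaryForm_mulVec_eq_zero_iff {l1 l2 l3 : ℝ} {a b : n → ℝ}
    (hab : LinearIndependent ℝ ![a, b]) (hdisc : 4 * l1 * l2 - l3 ^ 2 ≠ 0) (x : n → ℝ) :
    pullbackBinaryForm l1 l2 l3 a b *ᵥ x = 0 ↔ a ⬝ᵥ x = 0 ∧ b ⬝ᵥ x = 0 := by
  rw [pullbackBinaryForm_mulVec]
  constructor
  · intro h
    obtain ⟨hs, ht⟩ := LinearIndependent.pair_iff.1 hab _ _ h
    constructor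
    · refine (mul_eq_zero.1 ?_).resolve_left hdisc
      linear_combination 2 * l2 * hs - l3 * ht
    · refine (mul_eq_zero.1 ?_).resolve_left hdisc
      linear_combination 2 * l1 * ht - l3 * hs
  · rintro ⟨hs, ht⟩
    simp [hs, ht]

theorem rank_eq_of_ker_mulVecLin_eq {m m' : Type*} {A : Matrix m n ℝ} {B : Matrix m' n ℝ}
    (h : LinearMap.ker A.mulVecLin = LinearMap.ker B.mulVecLin) : A.rank = B.rank := by
  have hA := LinearMap.finrank_range_add_finrank_ker A.mulVecLin
  have hB := LinearMap.finrank_range_add_finrank_ker B.mulVecLin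
  rw [h] at hA
  exact Nat.add_right_cancel (hA.trans hB.symm)

theorem rank_pullbackBinaryForm {l1 l2 l3 : ℝ} {a b : n → ℝ}
    (hab : LinearIndependent ℝ ![a, b]) (hdisc : 4 * l1 * l2 - l3 ^ 2 ≠ 0) :
    (pullbackBinaryForm l1 l2 l3 a b).rank = 2 := by
  have hker : LinearMap.ker (pullbackBinaryForm l1 l2 l3 a b).mulVecLin =
      LinearMap.ker (of ![a, b]).mulVecLin := by
    ext x
    have hrows : of ![a, b] *ᵥ x = ![a ⬝ᵥ x, b ⬝ᵥ x] := by
      ext i; fin_cases i <;> rfl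
    simp only [LinearMap.mem_ker, mulVecLin_apply, hrows,
      pullbackBinaryForm_mulVec_eq_zero_iff hab hdisc]
    simp
  rw [rank_eq_of_ker_mulVecLin_eq hker, rank_eq_finrank_span_row]
  exact (finrank_span_eq_card hab).trans (Fintype.card_fin 2)

end PullbackBinaryForm

theorem hasEigenvalue_toLin'_of_det_eq_zero {n : Type*} [Fintype n] [DecidableEq n]
    {A : Matrix n n ℝ} {μ : ℝ} (h : (scalar n μ - A).det = 0) :
    Module.End.HasEigenvalue A.toLin' μ := by
  rwa [Module.End.hasEigenvalue_iff_isRoot_charpoly, charpoly_toLin', Polynomial.IsRoot,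
    eval_charpoly]

def neutralMassMatrix (l1 l2 l3 v1 V1 v2 : ℝ) : Matrix (Fin 3) (Fin 3) ℝ :=
  of ![![2 * l1 * V1 ^ 2, l3 * v2 * V1, 2 * l1 * v1 * V1],
       ![l3 * v2 * V1, 2 * l2 * v2 ^ 2, l3 * v1 * v2],
       ![2 * l1 * v1 * V1, l3 * v1 * v2, 2 * l1 * v1 ^ 2]]

section NeutralMassMatrix

variable {l1 l2 l3 v1 V1 v2 : ℝ}

theorem neutralMassMatrix_eq_pullbackBinaryForm :
    neutralMassMatrix l1 l2 l3 v1 V1 v2 = pullbackBinaryForm l1 l2 l3 ![V1, 0, v1] ![0, v2, 0] := by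
  ext i j
  fin_cases i <;> fin_cases j <;>
    simp only [neutralMassMatrix, pullbackBinaryForm, Fin.zero_eta, Fin.mk_one, Fin.reduceFinMk,
      of_apply, Matrix.add_apply, Matrix.smul_apply, vecMulVec_apply, cons_val, smul_eq_mul] <;>
    ring

theorem det_scalar_sub_neutralMassMatrix (μ : ℝ) :
    (scalar (Fin 3) μ - neutralMassMatrix l1 l2 l3 v1 V1 v2).det =
      μ * (μ ^ 2 - 2 * ((v1 ^ 2 + V1 ^ 2) * l1 + v2 ^ 2 * l2) * μ
        + (v1 ^ 2 + V1 ^ 2) * v2 ^ 2 * (4 * l1 * l2 - l3 ^ 2)) := by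
  simp only [det_fin_three, neutralMassMatrix, Matrix.sub_apply, scalar_apply, diagonal_apply,
    of_apply, cons_val, Fin.reduceEq, if_true, if_false]
  ring

theorem linearIndependent_vevVectors (hv2 : v2 ≠ 0) (hz : v1 ^ 2 + V1 ^ 2 ≠ 0) :
    LinearIndependent ℝ ![![V1, 0, v1], ![0, v2, 0]] := by
  refine LinearIndependent.pair_iff.2 fun s t h => ?_
  have h0 := congrFun h 0
  have h1 := congrFun h 1
  have h2 := congrFun h 2
  simp only [Pi.add_apply, Pi.smul_apply, Pi.zero_apply, cons_val, smul_eq_mul, mul_zero,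
    add_zero, zero_add] at h0 h1 h2
  have hs : s * (v1 ^ 2 + V1 ^ 2) = 0 := by linear_combination v1 * h2 + V1 * h0
  exact ⟨(mul_eq_zero.1 hs).resolve_right hz, (mul_eq_zero.1 h1).resolve_right hv2⟩

theorem neutralMassMatrix_posSemidef (hl2 : 0 < l2) (hdisc : l3 ^ 2 ≤ 4 * l1 * l2) :
    (neutralMassMatrix l1 l2 l3 v1 V1 v2).PosSemidef := by
  rw [neutralMassMatrix_eq_pullbackBinaryForm]
  exact pullbackBinaryForm_posSemidef _ _ hl2 hdisc

theorem rank_neutralMassMatrix (hv2 : v2 ≠ 0) (hz : v1 ^ 2 + V1 ^ 2 ≠ 0)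
    (hdisc : 4 * l1 * l2 - l3 ^ 2 ≠ 0) : (neutralMassMatrix l1 l2 l3 v1 V1 v2).rank = 2 := by
  rw [neutralMassMatrix_eq_pullbackBinaryForm]
  exact rank_pullbackBinaryForm (linearIndependent_vevVectors hv2 hz) hdisc

theorem hasEigenvalue_toLin'_neutralMassMatrix {μ : ℝ}
    (hμ : μ ^ 2 - 2 * ((v1 ^ 2 + V1 ^ 2) * l1 + v2 ^ 2 * l2) * μ
      + (v1 ^ 2 + V1 ^ 2) * v2 ^ 2 * (4 * l1 * l2 - l3 ^ 2) = 0) :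
    Module.End.HasEigenvalue (toLin' (neutralMassMatrix l1 l2 l3 v1 V1 v2)) μ :=
  hasEigenvalue_toLin'_of_det_eq_zero <| by rw [det_scalar_sub_neutralMassMatrix, hμ, mul_zero]

end NeutralMassMatrix

theorem sub_sqrt_sq_sub_pos {P Q : ℝ} (hP : 0 < P) (hQ : 0 < Q) : 0 < P - √(P ^ 2 - Q) :=
  sub_pos.2 ((Real.sqrt_lt' hP).2 (by linarith))

/-- The neutral CP-even mass matrix is positive semidefinite of rank 2, and its two
nonzero eigenvalues M²± are strictly positive. -/
theorem stmt_10 (l1 l2 l3 v1 V1 v2 : ℝ) (h1 : 0 < l1) (h2 : 0 < l2)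
    (h3 : 4 * l1 * l2 > l3 ^ 2) (hv2 : v2 ≠ 0) (hz : v1 ^ 2 + V1 ^ 2 ≠ 0) :
    let M : Matrix (Fin 3) (Fin 3) ℝ :=
      Matrix.of ![![2 * l1 * V1 ^ 2, l3 * v2 * V1, 2 * l1 * v1 * V1],
                  ![l3 * v2 * V1, 2 * l2 * v2 ^ 2, l3 * v1 * v2],
                  ![2 * l1 * v1 * V1, l3 * v1 * v2, 2 * l1 * v1 ^ 2]]
    let Mplus : ℝ := (v1 ^ 2 + V1 ^ 2) * l1 + v2 ^ 2 * l2 +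
      Real.sqrt (((v1 ^ 2 + V1 ^ 2) * l1 + v2 ^ 2 * l2) ^ 2
        + v2 ^ 2 * (v1 ^ 2 + V1 ^ 2) * (l3 ^ 2 - 4 * l1 * l2))
    let Mminus : ℝ := (v1 ^ 2 + V1 ^ 2) * l1 + v2 ^ 2 * l2 -
      Real.sqrt (((v1 ^ 2 + V1 ^ 2) * l1 + v2 ^ 2 * l2) ^ 2
        + v2 ^ 2 * (v1 ^ 2 + V1 ^ 2) * (l3 ^ 2 - 4 * l1 * l2))
    M.PosSemidef ∧ M.rank = 2 ∧ 0 < Mminus ∧ 0 < Mplus ∧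
      Module.End.HasEigenvalue (Matrix.toLin' M) Mplus ∧
      Module.End.HasEigenvalue (Matrix.toLin' M) Mminus := by
  intro M Mplus Mminus
  set S := v1 ^ 2 + V1 ^ 2
  set P := S * l1 + v2 ^ 2 * l2
  set Q := S * v2 ^ 2 * (4 * l1 * l2 - l3 ^ 2)
  have hS : 0 < S := lt_of_le_of_ne (by positivity) hz.symm
  have hdisc : 0 < 4 * l1 * l2 - l3 ^ 2 := sub_pos.2 h3
  have hP : 0 < P := by positivity
  have hQ : 0 < Q := by positivity
  have hQP : Q ≤ P ^ 2 := by
    have hgap : P ^ 2 - Q = (S * l1 - v2 ^ 2 * l2) ^ 2 + S * v2 ^ 2 * l3 ^ 2 := by ring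
    exact sub_nonneg.1 (hgap ▸ by positivity)
  have hD : P ^ 2 + v2 ^ 2 * S * (l3 ^ 2 - 4 * l1 * l2) = P ^ 2 - Q := by ring
  have hMplus : Mplus = P + √(P ^ 2 - Q) := by rw [← hD]
  have hMminus : Mminus = P - √(P ^ 2 - Q) := by rw [← hD]
  have hasEigenvalue_of_root (μ : ℝ) (hμ : (μ - P) ^ 2 = P ^ 2 - Q) :
      Module.End.HasEigenvalue (toLin' M) μ :=
    hasEigenvalue_toLin'_neutralMassMatrix (by linear_combination hμ)
  refine ⟨neutralMassMatrix_posSemidef h2 h3.le, rank_neutralMassMatrix hv2 hz hdisc.ne',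
    ?_, ?_, hasEigenvalue_of_root _ ?_, hasEigenvalue_of_root _ ?_⟩
  · exact hMminus ▸ sub_sqrt_sq_sub_pos hP hQ
  · rw [hMplus]; positivity
  · rw [hMplus, add_sub_cancel_left, Real.sq_sqrt (sub_nonneg.2 hQP)]
  · rw [hMminus, sub_sub_cancel_left, neg_sq, Real.sq_sqrt (sub_nonneg.2 hQP)]
end

section
/- Let λ₁, λ₂, λ₃, λ₄, μ₁², μ₂² be real with λ₁ ≠ λ₂ and λ₁λ₂ > 0. If (√λ₁ - √λ₂)²·K₀ + (λ₁ - λ₂)·K₃ = -(μ₁² + μ₂²) and (λ₁ - λ₂)·K₀ + (√λ₁ + √λ₂)²·K₃ = -(μ₁² - μ₂²) has a solution (K₀, K₃) (where λ₁, λ₂ > 0), then √λ₁·μ₂² + √λ₂·μ₁² = 0. -/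
/- `(a + b, -(a - b))` is a left null vector of the coefficient matrix, so it annihilates the
right-hand side of any solvable system. -/
theorem two_mul_add_eq_zero_of_solvable {R : Type*} [CommRing R] {a b l1 l2 m1 m2 K0 K3 : R}
    (ha : a ^ 2 = l1) (hb : b ^ 2 = l2)
    (e1 : (a - b) ^ 2 * K0 + (l1 - l2) * K3 = -(m1 + m2))
    (e2 : (l1 - l2) * K0 + (a + b) ^ 2 * K3 = -(m1 - m2)) :
    2 * (a * m2 + b * m1) = 0 := by
  subst ha hb
  linear_combination (a + b) * e1 - (a - b) * e2

theorem stmt_14_general (l1 l2 m1 m2 : ℝ) (h1 : 0 < l1) (h2 : 0 < l2)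
    (hsol : ∃ K0 K3 : ℝ,
      (Real.sqrt l1 - Real.sqrt l2) ^ 2 * K0 + (l1 - l2) * K3 = -(m1 + m2) ∧
      (l1 - l2) * K0 + (Real.sqrt l1 + Real.sqrt l2) ^ 2 * K3 = -(m1 - m2)) :
    Real.sqrt l1 * m2 + Real.sqrt l2 * m1 = 0 := by
  obtain ⟨K0, K3, e1, e2⟩ := hsol
  have h := two_mul_add_eq_zero_of_solvable (Real.sq_sqrt h1.le) (Real.sq_sqrt h2.le) e1 e2
  exact (mul_eq_zero.1 h).resolve_left two_ne_zero

/-- Solvability of the singular linear system for the exceptional solution w₅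
forces √λ₁·μ₂² + √λ₂·μ₁² = 0. -/
theorem stmt_14 (l1 l2 m1 m2 : ℝ) (hne : l1 ≠ l2) (h1 : 0 < l1) (h2 : 0 < l2)
    (hsol : ∃ K0 K3 : ℝ,
      (Real.sqrt l1 - Real.sqrt l2) ^ 2 * K0 + (l1 - l2) * K3 = -(m1 + m2) ∧
      (l1 - l2) * K0 + (Real.sqrt l1 + Real.sqrt l2) ^ 2 * K3 = -(m1 - m2)) :
    Real.sqrt l1 * m2 + Real.sqrt l2 * m1 = 0 :=
  stmt_14_general l1 l2 m1 m2 h1 h2 hsol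
end
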